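/- arXiv:1410.7478 — 6 statements merged into one kernel-verified Lean document; each statement's English description precedes it below -/
import Mathlib

section
/- If T ∈ SL₂(ℕ₀) and T is not the identity matrix, then the fractional linear transformation z ↦ T(z) has no fixed point in D₀; that is, T(z) ≠ z for every z ∈ D₀. -/
/-- The open first quadrant of "positive" complex numbers. -/
def D0 : Set ℂ := {z : ℂ | 0 < z.re ∧ 0 < z.im}

/-- A 2×2 matrix with nonnegative integer entries has determinant 1. -/
def SL2N (T : Matrix (Fin 2) (Fin 2) ℕ) : Prop :=
  T 0 0 * T 1 1 = T 0 1 * T 1 0 + 1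

/-- The Möbius action of such a matrix on a complex number. -/
noncomputable def act (T : Matrix (Fin 2) (Fin 2) ℕ) (z : ℂ) : ℂ :=
  ((T 0 0 : ℂ) * z + (T 0 1 : ℂ)) / ((T 1 0 : ℂ) * z + (T 1 1 : ℂ))

theorem no_fixed_point_in_D0 (T : Matrix (Fin 2) (Fin 2) ℕ) (hT : SL2N T)
    (hTne : T ≠ 1) (z : ℂ) (hz : z ∈ D0) : act T z ≠ z := by
  obtain ⟨hx, hy⟩ := hz
  intro h
  set a := T 0 0 with ha0
  set b := T 0 1 with hb0
  set c := T 1 0 with hc0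
  set d := T 1 1 with hd0
  set x := z.re
  set y := z.im
  rw [SL2N] at hT
  rw [← ha0, ← hb0, ← hc0, ← hd0] at hT
  have hcd : (c : ℂ) * z + (d : ℂ) ≠ 0 := by
    intro h0
    have h0re : (c : ℝ) * x + d = 0 := by
      have := congrArg Complex.re h0
      simpa [Complex.add_re, Complex.mul_re] using this
    have hcR : (0:ℝ) ≤ c := Nat.cast_nonneg c
    have hdR : (0:ℝ) ≤ d := Nat.cast_nonneg d
    have hc1 : (c : ℝ) = 0 := by nlinarith
    have hd1 : (d : ℝ) = 0 := by nlinarith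
    have hc2 : c = 0 := by exact_mod_cast hc1
    have hd2 : d = 0 := by exact_mod_cast hd1
    rw [hc2, hd2] at hT
    simp at hT
  rw [act, div_eq_iff hcd] at h
  have him := congrArg Complex.im h
  have hre := congrArg Complex.re h
  simp only [Complex.add_im, Complex.add_re, Complex.mul_im, Complex.mul_re,
    Complex.natCast_im, Complex.natCast_re, zero_mul, mul_zero, add_zero,
    zero_add, sub_zero] at him hre
  -- him : a * y = x * (c * y) + y * (c * x + d)
  -- hre : a * x + b = x * (c * x + d) - y * (c * y)
  have hy' : y ≠ 0 := ne_of_gt hy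
  have h1 : ((a:ℝ) - (2 * c * x + d)) * y = 0 := by linear_combination him
  have hA : (a : ℝ) = 2 * c * x + d := by
    have := (mul_eq_zero.mp h1).resolve_right hy'
    linarith
  have hkey : (c:ℝ) * (x^2 + y^2) + b = 0 := by linear_combination hre - x * hA
  have hbR : (0:ℝ) ≤ b := Nat.cast_nonneg b
  have hcR : (0:ℝ) ≤ c := Nat.cast_nonneg c
  have hc1 : (c : ℝ) = 0 := by
    have hle : (c:ℝ) ≤ 0 := by nlinarith [mul_pos hx hx, mul_pos hy hy]
    linarith
  have hb1 : (b : ℝ) = 0 := by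
    rw [hc1] at hkey; linarith
  have hc2 : c = 0 := by exact_mod_cast hc1
  have hb2 : b = 0 := by exact_mod_cast hb1
  have had : (a : ℝ) = d := by rw [hA, hc1]; ring
  have had2 : a = d := by exact_mod_cast had
  rw [hb2, hc2, had2] at hT
  simp at hT
  have hd1 : d = 1 := hT
  have ha1 : a = 1 := had2.trans hd1
  apply hTne
  ext i j
  fin_cases i <;> fin_cases j <;>
    simp [Matrix.one_apply, ← ha0, ← hb0, ← hc0, ← hd0, ha1, hb2, hc2, hd1]
end

section
/- If (L,R) is a left-right pair of matrices in SL₂(ℕ₀), then the subsemigroup of SL₂(ℕ₀) generated by {L,R} is free on {L,R}: whenever T₁T₂⋯T_k = T′₁T′₂⋯T′_ℓ with k, ℓ ≥ 0 and each T_i, T′_j ∈ {L,R}, one has k = ℓ and T_i = T′_i for all i (equivalently, any two finite words in L and R whose matrix products are equal must be the same word). -/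
/-- A pair of non-identity matrices in SL₂(ℕ₀) is a left-right pair if
`L(D₀) ∩ R(D₀) = ∅`. -/
def LeftRightPair (L R : Matrix (Fin 2) (Fin 2) ℕ) : Prop :=
  SL2N L ∧ SL2N R ∧ L ≠ 1 ∧ R ≠ 1 ∧ ∀ z₁ ∈ D0, ∀ z₂ ∈ D0, act L z₁ ≠ act R z₂

lemma sl2N_iff_det_eq_one (T : Matrix (Fin 2) (Fin 2) ℕ) :
    SL2N T ↔ ((Nat.castRingHom ℤ).mapMatrix T).det = 1 := by
  rw [SL2N, Matrix.det_fin_two]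
  simp only [RingHom.mapMatrix_apply, Matrix.map_apply, eq_natCast]
  omega

def sl2NSubmonoid : Submonoid (Matrix (Fin 2) (Fin 2) ℕ) where
  carrier := {T | SL2N T}
  mul_mem' {A B} hA hB := by
    simp only [Set.mem_ofPred_eq, sl2N_iff_det_eq_one, map_mul, Matrix.det_mul] at *
    rw [hA, hB, one_mul]
  one_mem' := by
    simp [sl2N_iff_det_eq_one]

lemma SL2N.mul_left_cancel {T A B : Matrix (Fin 2) (Fin 2) ℕ} (hT : SL2N T)
    (h : T * A = T * B) : A = B := by
  have hunit : IsUnit ((Nat.castRingHom ℤ).mapMatrix T) := by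
    rw [Matrix.isUnit_iff_isUnit_det, (sl2N_iff_det_eq_one T).mp hT]
    exact isUnit_one
  apply Matrix.map_injective (Nat.castRingHom ℤ).injective_nat
  apply hunit.mul_left_cancel
  have hmap := congrArg (Nat.castRingHom ℤ).mapMatrix h
  rwa [map_mul, map_mul] at hmap

lemma SL2N.act_denom_ne_zero {T : Matrix (Fin 2) (Fin 2) ℕ} (hT : SL2N T) {z : ℂ}
    (hz : z ∈ D0) : (T 1 0 : ℂ) * z + T 1 1 ≠ 0 := by
  intro h0
  have him : (T 1 0 : ℝ) * z.im = 0 := by simpa using congrArg Complex.im h0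
  have hc : T 1 0 = 0 := by exact_mod_cast (mul_eq_zero.mp him).resolve_right hz.2.ne'
  have hd : T 1 1 = 0 := by simpa [hc] using h0
  simp [SL2N, hc, hd] at hT

/-- With `T = !![a, b; c, d]` and `z = x + y i`, the numerators of `re` and `im` of `act T z`
over `|c z + d|²` are `(a x + b) (c x + d) + a c y² ≥ a d x > 0` and `(a d - b c) y = y`. -/
lemma SL2N.act_mem_D0 {T : Matrix (Fin 2) (Fin 2) ℕ} (hT : SL2N T) {z : ℂ} (hz : z ∈ D0) :
    act T z ∈ D0 := by
  have hnorm : 0 < Complex.normSq ((T 1 0 : ℂ) * z + T 1 1) :=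
    Complex.normSq_pos.mpr (hT.act_denom_ne_zero hz)
  obtain ⟨hx, hy⟩ := hz
  have hdet : (T 0 0 : ℝ) * T 1 1 = T 0 1 * T 1 0 + 1 := by exact_mod_cast hT
  have ha : (0 : ℝ) ≤ T 0 0 := Nat.cast_nonneg _
  have hb : (0 : ℝ) ≤ T 0 1 := Nat.cast_nonneg _
  have hc : (0 : ℝ) ≤ T 1 0 := Nat.cast_nonneg _
  have hd : (0 : ℝ) ≤ T 1 1 := Nat.cast_nonneg _
  constructor
  · rw [act, Complex.div_re, ← add_div]
    refine div_pos ?_ hnorm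
    simp only [Complex.add_re, Complex.add_im, Complex.mul_re, Complex.mul_im, Complex.natCast_re,
      Complex.natCast_im, zero_mul, sub_zero, add_zero]
    nlinarith [mul_nonneg (mul_nonneg ha hc) (add_nonneg (mul_self_nonneg z.re) (mul_self_nonneg z.im)),
      mul_nonneg (mul_nonneg hb hc) hx.le, mul_nonneg hb hd]
  · rw [act, Complex.div_im, ← sub_div]
    refine div_pos ?_ hnorm
    simp only [Complex.add_re, Complex.add_im, Complex.mul_re, Complex.mul_im, Complex.natCast_re,
      Complex.natCast_im, zero_mul, sub_zero, add_zero]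
    nlinarith

lemma act_mul {A B : Matrix (Fin 2) (Fin 2) ℕ} {z : ℂ} (hdB : (B 1 0 : ℂ) * z + B 1 1 ≠ 0) :
    act (A * B) z = act A (act B z) := by
  set w := act B z
  have hw : w * ((B 1 0 : ℂ) * z + B 1 1) = B 0 0 * z + B 0 1 := div_mul_cancel₀ _ hdB
  calc act (A * B) z
      = ((B 1 0 * z + B 1 1) * (A 0 0 * w + A 0 1)) / ((B 1 0 * z + B 1 1) * (A 1 0 * w + A 1 1)) := by
        simp only [act, Matrix.mul_apply, Fin.sum_univ_two, Nat.cast_add, Nat.cast_mul]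
        congr 1
        · linear_combination -(A 0 0 : ℂ) * hw
        · linear_combination -(A 1 0 : ℂ) * hw
    _ = act A w := mul_div_mul_left _ _ hdB

lemma act_one (z : ℂ) : act 1 z = z := by
  simp [act]

lemma one_add_I_mem_D0 : 1 + Complex.I ∈ D0 := by
  constructor <;> simp

namespace LeftRightPair

variable {L R : Matrix (Fin 2) (Fin 2) ℕ} (h : LeftRightPair L R)
include h

lemma act_ne {z₁ z₂ : ℂ} (hz₁ : z₁ ∈ D0) (hz₂ : z₂ ∈ D0) : act L z₁ ≠ act R z₂ :=
  h.2.2.2.2 z₁ hz₁ z₂ hz₂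

lemma sl2N_of_mem {T : Matrix (Fin 2) (Fin 2) ℕ} (hT : T = L ∨ T = R) : SL2N T := by
  rcases hT with rfl | rfl
  exacts [h.1, h.2.1]

lemma sl2N_list_prod {w : List (Matrix (Fin 2) (Fin 2) ℕ)} (hw : ∀ T ∈ w, T = L ∨ T = R) :
    SL2N w.prod :=
  sl2NSubmonoid.list_prod_mem fun T hT => h.sl2N_of_mem (hw T hT)

lemma eq_of_mul_eq_mul {T S P Q : Matrix (Fin 2) (Fin 2) ℕ} (hT : T = L ∨ T = R)
    (hS : S = L ∨ S = R) (hP : SL2N P) (hQ : SL2N Q) (hTS : T * P = S * Q) : T = S := by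
  have hz := one_add_I_mem_D0
  have hact : act T (act P (1 + Complex.I)) = act S (act Q (1 + Complex.I)) := by
    rw [← act_mul (hP.act_denom_ne_zero hz), ← act_mul (hQ.act_denom_ne_zero hz), hTS]
  rcases hT with rfl | rfl <;> rcases hS with rfl | rfl
  · rfl
  · exact absurd hact (h.act_ne (hP.act_mem_D0 hz) (hQ.act_mem_D0 hz))
  · exact absurd hact.symm (h.act_ne (hQ.act_mem_D0 hz) (hP.act_mem_D0 hz))
  · rfl

/-- If `S * P = 1` then `act S` maps `D0` onto `D0`, so it also meets the image of the other
letter. -/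
lemma mul_ne_one {S P : Matrix (Fin 2) (Fin 2) ℕ} (hS : S = L ∨ S = R) (hP : SL2N P) :
    S * P ≠ 1 := by
  intro hSP
  have hfix : ∀ z ∈ D0, act S (act P z) = z := fun z hz => by
    rw [← act_mul (hP.act_denom_ne_zero hz), hSP, act_one]
  have hz := one_add_I_mem_D0
  rcases hS with rfl | rfl
  · have hRz := h.2.1.act_mem_D0 hz
    exact h.act_ne (hP.act_mem_D0 hRz) hz (hfix _ hRz)
  · have hLz := h.1.act_mem_D0 hz
    exact h.act_ne hz (hP.act_mem_D0 hLz) (hfix _ hLz).symm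

end LeftRightPair

/-- The subsemigroup generated by a left-right pair is free: two words in
`L` and `R` with equal matrix products are the same word. -/
theorem leftRightPair_free (L R : Matrix (Fin 2) (Fin 2) ℕ)
    (h : LeftRightPair L R) (w₁ w₂ : List (Matrix (Fin 2) (Fin 2) ℕ))
    (h₁ : ∀ T ∈ w₁, T = L ∨ T = R) (h₂ : ∀ T ∈ w₂, T = L ∨ T = R)
    (hprod : w₁.prod = w₂.prod) : w₁ = w₂ := by
  induction w₁ generalizing w₂ with
  | nil =>
    cases w₂ with
    | nil => rfl
    | cons S s =>
      rw [List.forall_mem_cons] at h₂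
      rw [List.prod_nil, List.prod_cons] at hprod
      exact absurd hprod.symm (h.mul_ne_one h₂.1 (h.sl2N_list_prod h₂.2))
  | cons T t ih =>
    rw [List.forall_mem_cons] at h₁
    cases w₂ with
    | nil =>
      rw [List.prod_nil, List.prod_cons] at hprod
      exact absurd hprod (h.mul_ne_one h₁.1 (h.sl2N_list_prod h₁.2))
    | cons S s =>
      rw [List.forall_mem_cons] at h₂
      rw [List.prod_cons, List.prod_cons] at hprod
      obtain rfl : T = S :=
        h.eq_of_mul_eq_mul h₁.1 h₂.1 (h.sl2N_list_prod h₁.2) (h.sl2N_list_prod h₂.2) hprod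
      rw [ih s h₁.2 h₂.2 ((h.sl2N_of_mem h₁.1).mul_left_cancel hprod)]
end

section
/- Let (L,R) be a left-right pair of matrices in SL₂(ℕ₀) and let w₁, w₂ ∈ D₀. If orbit(w₁) ∩ orbit(w₂) ≠ ∅, then orbit(w₁) ⊆ orbit(w₂) or orbit(w₂) ⊆ orbit(w₁). -/
/-- The orbit of w under the semigroup generated by {L, R} (including the
empty product, so w itself belongs to its orbit). -/
def orbit (L R : Matrix (Fin 2) (Fin 2) ℕ) (w : ℂ) : Set ℂ :=
  {z | ∃ l : List (Matrix (Fin 2) (Fin 2) ℕ),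
    (∀ T ∈ l, T = L ∨ T = R) ∧ act l.prod w = z}


/-!
A left-right pair gives unique factorisation of orbit points. Each Möbius map of determinant 1
is injective on D₀ and maps D₀ into itself, and `L(D₀) ∩ R(D₀) = ∅`; so from `U w₁ = V w₂`
with `U`, `V` words in `L`, `R` the leading letters must agree and can be cancelled, until one
word is exhausted. Then one of `w₁`, `w₂` lies in the orbit of the other, and orbits are closed
under the action of words.
-/

open Complex

namespace SL2N

variable {T : Matrix (Fin 2) (Fin 2) ℕ}

lemma mul {A B : Matrix (Fin 2) (Fin 2) ℕ} (hA : SL2N A) (hB : SL2N B) : SL2N (A * B) := by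
  unfold SL2N at *
  simp only [Matrix.mul_apply, Fin.sum_univ_two]
  zify at *
  linear_combination (B 0 0 * B 1 1 - B 0 1 * B 1 0 : ℤ) * hA + hB

lemma list_prod {l : List (Matrix (Fin 2) (Fin 2) ℕ)} (hl : ∀ T ∈ l, SL2N T) : SL2N l.prod :=
  List.prod_induction _ (fun _ _ ↦ mul) (by simp [SL2N]) hl

lemma denom_ne_zero (hT : SL2N T) {z : ℂ} (hz : z ∈ D0) : (T 1 0 : ℂ) * z + T 1 1 ≠ 0 := by
  intro h
  have hc : T 1 0 = 0 := by
    have him := congrArg Complex.im h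
    simp only [add_im, mul_im, natCast_re, natCast_im, zero_mul, add_zero, zero_im,
      mul_eq_zero, Nat.cast_eq_zero] at him
    exact him.resolve_right hz.2.ne'
  have hd : T 1 1 = 0 := by exact_mod_cast (by simpa [hc] using h : (T 1 1 : ℂ) = 0)
  simp [SL2N, hc, hd] at hT

lemma act_im (hT : SL2N T) (z : ℂ) :
    (act T z).im = z.im / normSq ((T 1 0 : ℂ) * z + T 1 1) := by
  have hdet : (T 0 0 : ℝ) * T 1 1 = T 0 1 * T 1 0 + 1 := by exact_mod_cast hT
  rw [act, div_im, ← sub_div]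
  congr 1
  simp only [add_re, add_im, mul_re, mul_im, natCast_re, natCast_im]
  linear_combination z.im * hdet

/-- The numerator is rewritten with `ad = bc + 1` so that it is visibly positive on `D₀`. -/
lemma act_re (hT : SL2N T) (z : ℂ) :
    (act T z).re = (T 0 0 * T 1 0 * ‖z‖ ^ 2 + (2 * T 0 1 * T 1 0 + 1) * z.re + T 0 1 * T 1 1)
      / normSq ((T 1 0 : ℂ) * z + T 1 1) := by
  have hdet : (T 0 0 : ℝ) * T 1 1 = T 0 1 * T 1 0 + 1 := by exact_mod_cast hT
  rw [act, div_re, ← add_div]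
  congr 1
  simp only [add_re, add_im, mul_re, mul_im, natCast_re, natCast_im, ← normSq_eq_norm_sq,
    normSq_apply]
  linear_combination z.re * hdet

lemma mapsTo_act (hT : SL2N T) : Set.MapsTo (act T) D0 D0 := by
  intro z hz
  have hN : 0 < normSq ((T 1 0 : ℂ) * z + T 1 1) := normSq_pos.2 (hT.denom_ne_zero hz)
  have hre : 0 < z.re := hz.1
  have him : 0 < z.im := hz.2
  exact ⟨by rw [hT.act_re]; exact div_pos (by positivity) hN,
    by rw [hT.act_im]; exact div_pos him hN⟩

lemma injOn_act (hT : SL2N T) : Set.InjOn (act T) D0 := by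
  intro z₁ hz₁ z₂ hz₂ heq
  rw [act, act, div_eq_div_iff (hT.denom_ne_zero hz₁) (hT.denom_ne_zero hz₂)] at heq
  have hdet : (T 0 0 : ℂ) * T 1 1 = T 0 1 * T 1 0 + 1 := by exact_mod_cast hT
  linear_combination heq - (z₁ - z₂) * hdet

lemma act_mul {A B : Matrix (Fin 2) (Fin 2) ℕ} (hA : SL2N A) (hB : SL2N B) {z : ℂ}
    (hz : z ∈ D0) : act (A * B) z = act A (act B z) := by
  have hdB := hB.denom_ne_zero hz
  have hdA := hA.denom_ne_zero (hB.mapsTo_act hz)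
  have hdAB := (hA.mul hB).denom_ne_zero hz
  unfold act at hdA ⊢
  rw [div_eq_div_iff hdAB hdA]
  have hw : ((B 0 0 : ℂ) * z + B 0 1) / (B 1 0 * z + B 1 1) * (B 1 0 * z + B 1 1)
      = B 0 0 * z + B 0 1 := div_mul_cancel₀ _ hdB
  simp only [Matrix.mul_apply, Fin.sum_univ_two]
  push_cast
  linear_combination ((A 0 1 : ℂ) * A 1 0 - A 0 0 * A 1 1) * hw

end SL2N

section Words

variable {L R : Matrix (Fin 2) (Fin 2) ℕ}

lemma sl2N_of_eq_or_eq (hL : SL2N L) (hR : SL2N R) {T : Matrix (Fin 2) (Fin 2) ℕ}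
    (hT : T = L ∨ T = R) : SL2N T :=
  hT.elim (· ▸ hL) (· ▸ hR)

lemma sl2N_word_prod (hL : SL2N L) (hR : SL2N R) {l : List (Matrix (Fin 2) (Fin 2) ℕ)}
    (hl : ∀ T ∈ l, T = L ∨ T = R) : SL2N l.prod :=
  SL2N.list_prod fun T hT ↦ sl2N_of_eq_or_eq hL hR (hl T hT)

lemma orbit_subset_of_mem (hL : SL2N L) (hR : SL2N R) {w₁ w₂ : ℂ} (hw₂ : w₂ ∈ D0)
    (h : w₁ ∈ orbit L R w₂) : orbit L R w₁ ⊆ orbit L R w₂ := by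
  obtain ⟨v, hv, rfl⟩ := h
  rintro _ ⟨u, hu, rfl⟩
  refine ⟨u ++ v, fun T hT ↦ (List.mem_append.mp hT).elim (hu T) (hv T), ?_⟩
  rw [List.prod_append, (sl2N_word_prod hL hR hu).act_mul (sl2N_word_prod hL hR hv) hw₂]

lemma LeftRightPair.eq_and_eq_of_act_eq (h : LeftRightPair L R)
    {T S : Matrix (Fin 2) (Fin 2) ℕ} (hT : T = L ∨ T = R) (hS : S = L ∨ S = R)
    {z₁ z₂ : ℂ} (hz₁ : z₁ ∈ D0) (hz₂ : z₂ ∈ D0) (heq : act T z₁ = act S z₂) :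
    T = S ∧ z₁ = z₂ := by
  obtain ⟨hL, hR, -, -, hdisj⟩ := h
  rcases hT with rfl | rfl <;> rcases hS with rfl | rfl
  · exact ⟨rfl, hL.injOn_act hz₁ hz₂ heq⟩
  · exact (hdisj _ hz₁ _ hz₂ heq).elim
  · exact (hdisj _ hz₂ _ hz₁ heq.symm).elim
  · exact ⟨rfl, hR.injOn_act hz₁ hz₂ heq⟩

lemma LeftRightPair.mem_orbit_or_mem_orbit_of_act_eq (h : LeftRightPair L R)
    {u v : List (Matrix (Fin 2) (Fin 2) ℕ)}
    (hu : ∀ T ∈ u, T = L ∨ T = R) (hv : ∀ T ∈ v, T = L ∨ T = R)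
    {w₁ w₂ : ℂ} (hw₁ : w₁ ∈ D0) (hw₂ : w₂ ∈ D0) (heq : act u.prod w₁ = act v.prod w₂) :
    w₁ ∈ orbit L R w₂ ∨ w₂ ∈ orbit L R w₁ := by
  induction u generalizing v with
  | nil => exact .inl ⟨v, hv, by simpa [act, SL2N] using heq.symm⟩
  | cons T t ih =>
    cases v with
    | nil => exact .inr ⟨T :: t, hu, by simpa [act, SL2N] using heq⟩
    | cons S s =>
      simp only [List.mem_cons, forall_eq_or_imp] at hu hv
      have ht := sl2N_word_prod h.1 h.2.1 hu.2
      have hs := sl2N_word_prod h.1 h.2.1 hv.2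
      rw [List.prod_cons, List.prod_cons, (sl2N_of_eq_or_eq h.1 h.2.1 hu.1).act_mul ht hw₁,
        (sl2N_of_eq_or_eq h.1 h.2.1 hv.1).act_mul hs hw₂] at heq
      obtain ⟨-, htail⟩ := h.eq_and_eq_of_act_eq hu.1 hv.1 (ht.mapsTo_act hw₁)
        (hs.mapsTo_act hw₂) heq
      exact ih hu.2 hv.2 htail

end Words

/-- If two orbits intersect, one contains the other. -/
theorem orbits_nested (L R : Matrix (Fin 2) (Fin 2) ℕ)
    (h : LeftRightPair L R) (w₁ : ℂ) (hw₁ : w₁ ∈ D0) (w₂ : ℂ) (hw₂ : w₂ ∈ D0)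
    (hint : (orbit L R w₁ ∩ orbit L R w₂).Nonempty) :
    orbit L R w₁ ⊆ orbit L R w₂ ∨ orbit L R w₂ ⊆ orbit L R w₁ := by
  obtain ⟨x, ⟨u, hu, hux⟩, ⟨v, hv, hvx⟩⟩ := hint
  rcases h.mem_orbit_or_mem_orbit_of_act_eq hu hv hw₁ hw₂ (hux.trans hvx.symm) with h₁ | h₂
  · exact .inl (orbit_subset_of_mem h.1 h.2.1 hw₂ h₁)
  · exact .inr (orbit_subset_of_mem h.1 h.2.1 hw₁ h₂)
end

section
/- Let u be a positive integer. The linear fractional transformation L_u(z) = z/(uz+1) maps D_n \ D_{n+1} bijectively onto D_{n+1} \ D_{n+2} for every integer n ≥ 0; that is, the image of D_n \ D_{n+1} under L_u equals D_{n+1} \ D_{n+2}. -/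
/-- For a positive integer u, the open half disk D_n = {x+yi ∈ D₀ : nu(x²+y²) < x}.
For n = 0 this is all of D₀. -/
def Dn (u n : ℕ) : Set ℂ :=
  {z ∈ D0 | (n : ℝ) * (u : ℝ) * (z.re ^ 2 + z.im ^ 2) < z.re}

open Set

def lowerQuadrant (c : ℝ) : Set ℂ := {w : ℂ | w.im < 0 ∧ c < w.re}

lemma inv_mem_lowerQuadrant_iff {c : ℝ} {z : ℂ} :
    z⁻¹ ∈ lowerQuadrant c ↔ 0 < z.im ∧ c * Complex.normSq z < z.re := by
  rcases eq_or_ne z 0 with rfl | hz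
  · simp [lowerQuadrant]
  have hN : 0 < Complex.normSq z := Complex.normSq_pos.2 hz
  simp only [lowerQuadrant, mem_ofPred_eq, Complex.inv_re, Complex.inv_im, neg_div,
    neg_lt_zero, div_pos_iff_of_pos_right hN, lt_div_iff₀ hN]

lemma Dn_eq_preimage_inv (u n : ℕ) : Dn u n = Inv.inv ⁻¹' lowerQuadrant (n * u) := by
  ext z
  rw [mem_preimage, inv_mem_lowerQuadrant_iff, Complex.normSq_apply]
  have hnu : (0 : ℝ) ≤ n * u := by positivity
  simp only [Dn, D0, mem_ofPred_eq]
  constructor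
  · rintro ⟨⟨-, him⟩, h⟩
    exact ⟨him, by nlinarith⟩
  · rintro ⟨him, h⟩
    exact ⟨⟨by nlinarith, him⟩, by nlinarith⟩

lemma image_const_add_lowerQuadrant (a c : ℝ) :
    (fun w : ℂ => (a : ℂ) + w) '' lowerQuadrant c = lowerQuadrant (c + a) := by
  ext w
  simp [lowerQuadrant, add_comm c]

lemma div_mul_add_one_eq_inv_add_inv {K : Type*} [Field K] (a : K) {z : K} (hz : z ≠ 0) :
    z / (a * z + 1) = (a + z⁻¹)⁻¹ := by
  rw [show a + z⁻¹ = (a * z + 1) / z by field_simp, inv_div]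

theorem Lu_maps_crescent_onto_general (u : ℕ) (n : ℕ) :
    Set.InjOn (fun z : ℂ => z / ((u : ℂ) * z + 1)) (Dn u n \ Dn u (n + 1)) ∧
    (fun z : ℂ => z / ((u : ℂ) * z + 1)) '' (Dn u n \ Dn u (n + 1))
      = Dn u (n + 1) \ Dn u (n + 2) := by
  set T : ℂ → ℂ := fun w => ((u : ℝ) : ℂ) + w
  have hT (m : ℕ) : T '' lowerQuadrant (m * u) = lowerQuadrant ((m + 1 : ℕ) * u) := by
    rw [image_const_add_lowerQuadrant]
    push_cast
    ring_nf
  have hconj : EqOn (fun z : ℂ => z / ((u : ℂ) * z + 1)) (Inv.inv ∘ T ∘ Inv.inv)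
      (Dn u n \ Dn u (n + 1)) := fun z hz =>
    div_mul_add_one_eq_inv_add_inv _ (fun h => by simp [h, Dn, D0] at hz)
  refine ⟨(inv_injective.comp ((add_right_injective _).comp inv_injective)).injOn.congr
    hconj.symm, ?_⟩
  rw [hconj.image_eq]
  simp only [Dn_eq_preimage_inv, ← preimage_sdiff]
  rw [image_comp, image_comp, image_preimage_eq _ inv_surjective,
    image_sdiff (add_right_injective _), hT, hT]
  exact image_inv_eq_inv

/-- L_u maps the half crescent D_n \ D_{n+1} bijectively onto D_{n+1} \ D_{n+2}. -/
theorem Lu_maps_crescent_onto (u : ℕ) (hu : 0 < u) (n : ℕ) :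
    Set.InjOn (fun z : ℂ => z / ((u : ℂ) * z + 1)) (Dn u n \ Dn u (n + 1)) ∧
    (fun z : ℂ => z / ((u : ℂ) * z + 1)) '' (Dn u n \ Dn u (n + 1))
      = Dn u (n + 1) \ Dn u (n + 2) :=
  Lu_maps_crescent_onto_general u n
end

section
/- For all positive integers u and v, a number z = x + yi ∈ D₀ is an orphan for the pair (L_u, R_v) — i.e., there is no w ∈ D₀ with L_u(w) = z or R_v(w) = z — if and only if u(x² + y²) ≥ x and x ≤ v. Hence the fundamental domain is Ω(L_u,R_v) = {x + yi ∈ D₀ : u(x²+y²) ≥ x and x ≤ v}. -/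
open Complex

section Parents

variable {r : ℝ} {z w : ℂ}

lemma ofReal_mul_add_one_ne_zero (hr : 0 ≤ r) (hw : 0 < w.re) : (r : ℂ) * w + 1 ≠ 0 := by
  intro h
  have := congrArg re h
  simp only [add_re, re_ofReal_mul, one_re, zero_re] at this
  nlinarith

lemma one_sub_ofReal_mul_ne_zero (r : ℝ) (hz : z.im ≠ 0) : 1 - (r : ℂ) * z ≠ 0 := by
  intro h
  have him := congrArg im h
  have hre := congrArg re h
  simp only [sub_im, sub_re, one_im, one_re, im_ofReal_mul, re_ofReal_mul, zero_im,
    zero_re, zero_sub, neg_eq_zero, mul_eq_zero] at him hre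
  rcases him with hr | hz'
  · simp [hr] at hre
  · exact hz hz'

lemma div_ofReal_mul_add_one_eq_iff (hr : 0 ≤ r) (hw : 0 < w.re) (hz : z.im ≠ 0) :
    w / ((r : ℂ) * w + 1) = z ↔ w = z / (1 - (r : ℂ) * z) := by
  rw [div_eq_iff (ofReal_mul_add_one_ne_zero hr hw),
    eq_div_iff (one_sub_ofReal_mul_ne_zero r hz)]
  constructor <;> intro h <;> linear_combination h

lemma re_div_one_sub_ofReal_mul (r : ℝ) (z : ℂ) :
    (z / (1 - (r : ℂ) * z)).re = (z.re - r * normSq z) / normSq (1 - (r : ℂ) * z) := by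
  rw [div_re, ← add_div]
  congr 1
  simp only [sub_re, sub_im, one_re, one_im, re_ofReal_mul, im_ofReal_mul, normSq_apply]
  ring

lemma im_div_one_sub_ofReal_mul (r : ℝ) (z : ℂ) :
    (z / (1 - (r : ℂ) * z)).im = z.im / normSq (1 - (r : ℂ) * z) := by
  rw [div_im, ← sub_div]
  congr 1
  simp only [sub_re, sub_im, one_re, one_im, re_ofReal_mul, im_ofReal_mul]
  ring

lemma div_one_sub_ofReal_mul_mem_D0_iff (r : ℝ) (hz : 0 < z.im) :
    z / (1 - (r : ℂ) * z) ∈ D0 ↔ r * normSq z < z.re := by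
  have hN : 0 < normSq (1 - (r : ℂ) * z) :=
    normSq_pos.mpr (one_sub_ofReal_mul_ne_zero r hz.ne')
  simp only [D0, Set.mem_ofPred_eq, re_div_one_sub_ofReal_mul, im_div_one_sub_ofReal_mul,
    div_pos_iff_of_pos_right hN, hz, and_true, sub_pos]

lemma exists_mem_D0_div_ofReal_mul_add_one_eq_iff (hr : 0 ≤ r) (hz : 0 < z.im) :
    (∃ w ∈ D0, w / ((r : ℂ) * w + 1) = z) ↔ r * normSq z < z.re := by
  rw [← div_one_sub_ofReal_mul_mem_D0_iff r hz]
  constructor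
  · rintro ⟨w, hw, hwz⟩
    rw [div_ofReal_mul_add_one_eq_iff hr hw.1 hz.ne'] at hwz
    exact hwz ▸ hw
  · intro h
    exact ⟨_, h, (div_ofReal_mul_add_one_eq_iff hr h.1 hz.ne').mpr rfl⟩

lemma exists_mem_D0_add_ofReal_eq_iff (a : ℝ) (hz : 0 < z.im) :
    (∃ w ∈ D0, w + (a : ℂ) = z) ↔ a < z.re := by
  constructor
  · rintro ⟨w, hw, rfl⟩
    simpa using hw.1
  · intro h
    refine ⟨z - a, ⟨?_, ?_⟩, sub_add_cancel z a⟩ <;> simp [h, hz]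

end Parents

theorem orphan_iff_general (u v : ℕ) (z : ℂ) (hz : z ∈ D0) :
    (¬ ∃ w ∈ D0, w / ((u : ℂ) * w + 1) = z ∨ w + (v : ℂ) = z) ↔
      (z.re ≤ (u : ℝ) * (z.re ^ 2 + z.im ^ 2) ∧ z.re ≤ (v : ℝ)) := by
  have hL := exists_mem_D0_div_ofReal_mul_add_one_eq_iff (Nat.cast_nonneg u) hz.2
  have hR := exists_mem_D0_add_ofReal_eq_iff (v : ℝ) hz.2
  push_cast at hL hR
  simp only [and_or_left, exists_or, not_or, hL, hR, not_lt, normSq_apply, ← sq]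

/-- z = x + yi ∈ D₀ is an orphan for the pair (L_u, R_v) — it has no parent,
i.e. no w ∈ D₀ with L_u(w) = z or R_v(w) = z — if and only if
u(x² + y²) ≥ x and x ≤ v.  Hence the fundamental domain is
Ω(L_u,R_v) = {x + yi ∈ D₀ : u(x²+y²) ≥ x and x ≤ v}. -/
theorem orphan_iff (u v : ℕ) (hu : 0 < u) (hv : 0 < v) (z : ℂ) (hz : z ∈ D0) :
    (¬ ∃ w ∈ D0, w / ((u : ℂ) * w + 1) = z ∨ w + (v : ℂ) = z) ↔
      (z.re ≤ (u : ℝ) * (z.re ^ 2 + z.im ^ 2) ∧ z.re ≤ (v : ℝ)) :=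
  orphan_iff_general u v z hz
end

section
/- Let u, v be positive integers and let (w_n)_{n≥1} be an infinite path in the forest F(L_u,R_v) such that w_{n+1} = L_u(w_n) for infinitely many n and w_{n+1} = R_v(w_n) for infinitely many n. Then the sequence (w_n) has no limit: it converges to no complex number and |w_n| does not tend to infinity. Consequently, the set of cusps of the semigroup ⟨L_u,R_v⟩ (the limits of infinite paths in F(L_u,R_v), including ∞) is exactly {0, ∞}. -/
open Filter OnePoint

/-- An infinite path in the forest F(L_u,R_v): a sequence in D₀ in which each
term is followed by its left child L_u(w) = w/(uw+1) or its right child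
R_v(w) = w + v. -/
def IsPath (u v : ℕ) (w : ℕ → ℂ) : Prop :=
  ∀ n : ℕ, w n ∈ D0 ∧
    (w (n + 1) = w n / ((u : ℂ) * w n + 1) ∨ w (n + 1) = w n + (v : ℂ))

/-- The cusps of ⟨L_u, R_v⟩: the limits in ℂ ∪ {∞} of infinite paths
in the forest F(L_u,R_v). -/
def Cusps (u v : ℕ) : Set (OnePoint ℂ) :=
  {c | ∃ w : ℕ → ℂ, IsPath u v w ∧
    Tendsto (fun n => ((w n : ℂ) : OnePoint ℂ)) atTop (nhds c)}

/-!
Inversion `z ↦ z⁻¹` conjugates `L_u` to the translation by `u`, since `L_u(z)⁻¹ = z⁻¹ + u`,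
and maps `D₀` to the fourth quadrant. Hence a path that eventually takes only left steps tends
to `0`, and one that eventually takes only right steps tends to `∞`. A right step moves a point
by `v`, so a path with infinitely many right steps has no finite limit; a left step lands in the
disc `‖z‖ < 1/u` (because `Re (z⁻¹ + u) > u`), so a path with infinitely many left steps does
not tend to `∞`.
-/

open Topology Bornology

theorem tendsto_cobounded_of_eventually_add_const {E : Type*} [NormedAddCommGroup E]
    [NormedSpace ℝ E] {a : ℕ → E} {c : E} (hc : c ≠ 0)
    (h : ∀ᶠ n in atTop, a (n + 1) = a n + c) : Tendsto a atTop (cobounded E) := by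
  obtain ⟨N, hN⟩ := eventually_atTop.1 h
  have ha : ∀ k : ℕ, a (k + N) = a N + k • c := by
    intro k
    induction k with
    | zero => simp
    | succ k ih => rw [Nat.add_right_comm, hN _ (Nat.le_add_left N k), ih, succ_nsmul, add_assoc]
  have hlower : ∀ k : ℕ, k * ‖c‖ - ‖a N‖ ≤ ‖a (k + N)‖ := fun k => by
    have := norm_sub_le (a N + k • c) (a N)
    rw [add_sub_cancel_left, RCLike.norm_nsmul ℝ, nsmul_eq_mul] at this
    rw [ha]
    linarith
  rw [← tendsto_add_atTop_iff_nat N, ← tendsto_norm_atTop_iff_cobounded]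
  exact tendsto_atTop_mono hlower <| tendsto_atTop_add_const_right _ _ <|
    tendsto_natCast_atTop_atTop.atTop_mul_const (norm_pos_iff.2 hc)

theorem not_tendsto_of_frequently_add_const {E : Type*} [AddCommGroup E] [TopologicalSpace E]
    [IsTopologicalAddGroup E] [T1Space E] {w : ℕ → E} {c : E} (hc : c ≠ 0)
    (h : ∃ᶠ n in atTop, w (n + 1) = w n + c) (x : E) : ¬ Tendsto w atTop (𝓝 x) := by
  intro hx
  have hdiff : Tendsto (fun n => w (n + 1) - w n) atTop (𝓝 0) := by
    simpa using (hx.comp (tendsto_add_atTop_nat 1)).sub hx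
  obtain ⟨n, hstep, hne⟩ := (h.and_eventually (hdiff.eventually_ne hc.symm)).exists
  exact hne (by rw [hstep, add_sub_cancel_left])

theorem div_mul_add_one_eq_inv_inv_add {K : Type*} [Field K] (u : K) {z : K} (hz : z ≠ 0) :
    z / (u * z + 1) = (z⁻¹ + u)⁻¹ := by
  rw [← inv_div, add_div, mul_div_cancel_right₀ _ hz, one_div, add_comm]

theorem re_inv_pos {z : ℂ} (hz : 0 < z.re) : 0 < z⁻¹.re := by
  rw [Complex.inv_re]
  exact div_pos hz (Complex.normSq_pos.2 (Complex.ne_zero_of_re_pos hz))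

theorem div_mul_add_one_mem_D0 {z : ℂ} (hz : z ∈ D0) {t : ℝ} (ht : 0 ≤ t) :
    z / (t * z + 1) ∈ D0 := by
  have hnz : 0 < Complex.normSq z := Complex.normSq_pos.2 (Complex.ne_zero_of_re_pos hz.1)
  rw [div_mul_add_one_eq_inv_inv_add _ (Complex.ne_zero_of_re_pos hz.1)]
  set y := z⁻¹ + t
  have hyre : 0 < y.re := by
    simp only [y, Complex.add_re, Complex.ofReal_re]
    linarith [re_inv_pos hz.1]
  have hyim : y.im < 0 := by
    simp only [y, Complex.add_im, Complex.inv_im, Complex.ofReal_im, add_zero, neg_div]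
    exact neg_neg_of_pos (div_pos hz.2 hnz)
  refine ⟨re_inv_pos hyre, ?_⟩
  rw [Complex.inv_im]
  exact div_pos (neg_pos.2 hyim) (Complex.normSq_pos.2 (Complex.ne_zero_of_re_pos hyre))

theorem norm_div_mul_add_one_lt {z : ℂ} (hz : 0 < z.re) {t : ℝ} (ht : 0 < t) :
    ‖z / (t * z + 1)‖ < t⁻¹ := by
  have hre : t < (z⁻¹ + t).re := by
    simp only [Complex.add_re, Complex.ofReal_re]
    linarith [re_inv_pos hz]
  rw [div_mul_add_one_eq_inv_inv_add _ (Complex.ne_zero_of_re_pos hz), norm_inv]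
  exact inv_strictAnti₀ ht (hre.trans_le (Complex.re_le_norm _))

theorem tendsto_zero_of_eventually_div_mul_add_one {u : ℂ} (hu : u ≠ 0) {w : ℕ → ℂ}
    (hw : ∀ n, w n ≠ 0) (h : ∀ᶠ n in atTop, w (n + 1) = w n / (u * w n + 1)) :
    Tendsto w atTop (𝓝 0) := by
  have hinv : ∀ᶠ n in atTop, (w (n + 1))⁻¹ = (w n)⁻¹ + u := h.mono fun n hn => by
    rw [hn, div_mul_add_one_eq_inv_inv_add u (hw n), inv_inv]
  have hcob := tendsto_cobounded_of_eventually_add_const (a := fun n => (w n)⁻¹) hu hinv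
  simpa only [Function.comp_def, inv_inv] using tendsto_inv₀_cobounded.comp hcob

namespace IsPath

variable {u v : ℕ} {w : ℕ → ℂ}

theorem not_tendsto_norm_atTop (hu : 0 < u) (hw : IsPath u v w)
    (h : ∃ᶠ n in atTop, w (n + 1) = w n / (u * w n + 1)) :
    ¬ Tendsto (fun n => ‖w n‖) atTop atTop := by
  intro htop
  have hlarge := (htop.comp (tendsto_add_atTop_nat 1)).eventually_ge_atTop ((u : ℝ)⁻¹)
  obtain ⟨n, hstep, hn⟩ := (h.and_eventually hlarge).exists
  have hsmall := norm_div_mul_add_one_lt (hw n).1.1 ((Nat.cast_pos (α := ℝ)).2 hu)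
  rw [Complex.ofReal_natCast, ← hstep] at hsmall
  exact hsmall.not_ge hn

theorem eq_zero_of_tendsto (hu : 0 < u) (hv : 0 < v) (hw : IsPath u v w) {x : ℂ}
    (hx : Tendsto w atTop (𝓝 x)) : x = 0 := by
  have hright : ¬ ∃ᶠ n in atTop, w (n + 1) = w n + v :=
    fun h => not_tendsto_of_frequently_add_const (by exact_mod_cast hv.ne') h x hx
  have hleft : ∀ᶠ n in atTop, w (n + 1) = w n / (u * w n + 1) :=
    (not_frequently.1 hright).mono fun n hn => (hw n).2.resolve_right hn
  exact tendsto_nhds_unique hx <| tendsto_zero_of_eventually_div_mul_add_one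
    (by exact_mod_cast hu.ne') (fun n => Complex.ne_zero_of_re_pos (hw n).1.1) hleft

end IsPath

section Cusps

variable {u v : ℕ}

theorem cusps_subset (hu : 0 < u) (hv : 0 < v) :
    Cusps u v ⊆ {((0 : ℂ) : OnePoint ℂ), ∞} := by
  rintro c ⟨w, hw, hc⟩
  induction c using OnePoint.rec with
  | infty => exact Or.inr rfl
  | coe x =>
    have hx : Tendsto w atTop (𝓝 x) := isOpenEmbedding_coe.tendsto_nhds_iff.2 hc
    exact Or.inl (by rw [hw.eq_zero_of_tendsto hu hv hx])

theorem zero_mem_cusps (hu : 0 < u) : ((0 : ℂ) : OnePoint ℂ) ∈ Cusps u v := by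
  set L : ℂ → ℂ := fun z => z / (u * z + 1)
  have hmem : ∀ n, L^[n] (1 + Complex.I) ∈ D0 := by
    intro n
    induction n with
    | zero => constructor <;> simp
    | succ n ih =>
      have hL := div_mul_add_one_mem_D0 ih (Nat.cast_nonneg (α := ℝ) u)
      rw [Complex.ofReal_natCast] at hL
      rwa [Function.iterate_succ_apply']
  have hstep : ∀ n, L^[n + 1] (1 + Complex.I) = L (L^[n] (1 + Complex.I)) :=
    fun n => Function.iterate_succ_apply' _ _ _
  refine ⟨fun n => L^[n] (1 + Complex.I), fun n => ⟨hmem n, Or.inl (hstep n)⟩, ?_⟩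
  exact isOpenEmbedding_coe.tendsto_nhds_iff.1 <| tendsto_zero_of_eventually_div_mul_add_one
    (by exact_mod_cast hu.ne') (fun n => Complex.ne_zero_of_re_pos (hmem n).1)
    (Eventually.of_forall hstep)

theorem infty_mem_cusps (hv : 0 < v) : (∞ : OnePoint ℂ) ∈ Cusps u v := by
  set w : ℕ → ℂ := fun n => 1 + Complex.I + n * v
  have hstep : ∀ n, w (n + 1) = w n + v := fun n => by simp only [w]; push_cast; ring
  have hmem : ∀ n, w n ∈ D0 := fun n => by
    refine ⟨?_, by simp [w]⟩
    simp only [w, Complex.add_re, Complex.one_re, Complex.I_re, add_zero, Complex.mul_re,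
      Complex.natCast_re, Complex.natCast_im, mul_zero, sub_zero]
    positivity
  refine ⟨w, fun n => ⟨hmem n, Or.inr (hstep n)⟩, ?_⟩
  have hcob := tendsto_cobounded_of_eventually_add_const (by exact_mod_cast hv.ne')
    (Eventually.of_forall hstep)
  rw [Metric.cobounded_eq_cocompact, ← coclosedCompact_eq_cocompact] at hcob
  exact tendsto_coe_infty.comp hcob

end Cusps

/-- A path with infinitely many left steps and infinitely many right steps has
no limit (finite or infinite); consequently the set of cusps of ⟨L_u,R_v⟩
is exactly {0, ∞}. -/
theorem cusps_eq_zero_infty (u v : ℕ) (hu : 0 < u) (hv : 0 < v) :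
    (∀ w : ℕ → ℂ, IsPath u v w →
      {n : ℕ | w (n + 1) = w n / ((u : ℂ) * w n + 1)}.Infinite →
      {n : ℕ | w (n + 1) = w n + (v : ℂ)}.Infinite →
      (∀ c : ℂ, ¬ Tendsto w atTop (nhds c)) ∧
        ¬ Tendsto (fun n => ‖w n‖) atTop atTop) ∧
    Cusps u v = {((0 : ℂ) : OnePoint ℂ), (∞ : OnePoint ℂ)} := by
  refine ⟨fun w hw hleft hright => ⟨?_, ?_⟩, ?_⟩
  · exact not_tendsto_of_frequently_add_const (by exact_mod_cast hv.ne')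
      (Nat.frequently_atTop_iff_infinite.2 hright)
  · exact hw.not_tendsto_norm_atTop hu (Nat.frequently_atTop_iff_infinite.2 hleft)
  · refine (cusps_subset hu hv).antisymm ?_
    rintro c (rfl | rfl)
    exacts [zero_mem_cusps hu, infty_mem_cusps hv]
end
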